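/- If I is a nonzero ideal of an integral domain D generated by n elements, and G, H are nonzero ideals of D with IG ⊆ IH, then G^n ⊆ H. -/
import Mathlib

open Matrix BigOperators

/-- If every product of `n` elements of `G` lies in `H`, then `G ^ n ≤ H`. -/
lemma pow_le_of_prod_mem {D : Type*} [CommRing D] (G : Ideal D) :
    ∀ (n : ℕ) (H : Ideal D), (∀ g : Fin n → D, (∀ i, g i ∈ G) → (∏ i, g i) ∈ H) →
      G ^ n ≤ H := by
  intro n
  induction n with
  | zero =>
      intro H hp
      have h1 : (1 : D) ∈ H := by
        simpa using hp (fun i => i.elim0) (fun i => i.elim0)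
      have hH : H = ⊤ := (Ideal.eq_top_iff_one H).mpr h1
      simp [hH]
  | succ n ih =>
      intro H hp
      rw [pow_succ]
      rw [Ideal.mul_le]
      intro r hr s hs
      have hr' : r ∈ Submodule.comap (LinearMap.mulLeft D s) H := by
        refine ih (Submodule.comap (LinearMap.mulLeft D s) H) ?_ hr
        intro g hg
        have := hp (Fin.cons s g) (fun i => by
          refine Fin.cases ?_ ?_ i
          · simpa using hs
          · intro j; simpa using hg j)
        simpa [Fin.prod_cons, Submodule.mem_comap] using this
      simpa [Submodule.mem_comap, mul_comm] using hr'

/-- Kaplansky: if `I` is generated by `n` elements and `I*G ⊆ I*H`, then `G^n ⊆ H`. -/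
theorem pow_le_of_mul_le_mul (D : Type*) [CommRing D] [IsDomain D]
    (n : ℕ) (I G H : Ideal D) (hI : I ≠ 0) (hG : G ≠ 0) (hH : H ≠ 0)
    (hgen : ∃ s : Finset D, s.card = n ∧ Ideal.span (s : Set D) = I)
    (hle : I * G ≤ I * H) : G ^ n ≤ H := by
  obtain ⟨s, hcard, hspan⟩ := hgen
  -- enumerate the generators
  let e : {x // x ∈ s} ≃ Fin n := s.equivFinOfCardEq hcard
  set a : Fin n → D := fun i => ((e.symm i : {x // x ∈ s}) : D) with ha
  have hrange : Set.range a = (s : Set D) := by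
    ext x
    constructor
    · rintro ⟨i, rfl⟩
      exact (e.symm i).2
    · intro hx
      exact ⟨e ⟨x, hx⟩, by simp [ha]⟩
  have hspanA : Ideal.span (Set.range a) = I := by rw [hrange, hspan]
  have haI : ∀ i, a i ∈ I := fun i => hspanA ▸ Ideal.subset_span ⟨i, rfl⟩
  -- every element of I*H is a combination of the generators with coefficients in H
  have rep : ∀ x ∈ I * H, ∃ h : Fin n → D, (∀ k, h k ∈ H) ∧ x = ∑ k, a k * h k := by
    intro x hx
    refine Submodule.mul_induction_on hx ?_ ?_
    · intro m hm y hy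
      rw [← hspanA] at hm
      obtain ⟨c, hc⟩ := (Submodule.mem_span_range_iff_exists_fun D).mp hm
      refine ⟨fun k => c k * y, fun k => H.mul_mem_left _ hy, ?_⟩
      rw [← hc, Finset.sum_mul]
      exact Finset.sum_congr rfl (fun k _ => by simp [smul_eq_mul]; ring)
    · rintro x y ⟨hx', hx1, rfl⟩ ⟨hy', hy1, rfl⟩
      exact ⟨hx' + hy', fun k => H.add_mem (hx1 k) (hy1 k), by
        simp [mul_add, Finset.sum_add_distrib]⟩
  -- nonvanishing of some generator
  have hex : ∃ k, a k ≠ 0 := by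
    by_contra hcon
    push_neg at hcon
    apply hI
    rw [← hspanA]
    have hsub : Set.range a ⊆ {0} := by rintro _ ⟨i, rfl⟩; simp [hcon i]
    have hle' : Ideal.span (Set.range a) ≤ ⊥ := by
      rw [Ideal.span_le]
      simpa using hsub
    exact le_bot_iff.mp hle'
  -- main argument via the determinant trick
  refine pow_le_of_prod_mem G n H ?_
  intro g hg
  have hIH : ∀ i, a i * g i ∈ I * H := fun i =>
    hle (Ideal.mul_mem_mul (haI i) (hg i))
  choose h hmem hrep using fun i => rep _ (hIH i)
  set M : Matrix (Fin n) (Fin n) D := Matrix.diagonal g - Matrix.of h with hM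
  have hMa : M.mulVec a = 0 := by
    funext i
    have : (Matrix.of h).mulVec a i = a i * g i := by
      rw [hrep i]
      simp [Matrix.mulVec, dotProduct, mul_comm]
    simp [hM, Matrix.sub_mulVec, Matrix.mulVec_diagonal, this, mul_comm]
  have hdet : M.det = 0 := by
    obtain ⟨k, hk⟩ := hex
    have h1 : (M.det • (1 : Matrix (Fin n) (Fin n) D)).mulVec a = 0 := by
      rw [← Matrix.adjugate_mul, ← Matrix.mulVec_mulVec, hMa, Matrix.mulVec_zero]
    have h1' : M.det • a = 0 := by
      simpa [Matrix.smul_mulVec, Matrix.one_mulVec] using h1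
    have h2 : M.det * a k = 0 := by simpa using congrFun h1' k
    rcases mul_eq_zero.mp h2 with h | h
    · exact h
    · exact absurd h hk
  -- reduce mod H
  have hq : Ideal.Quotient.mk H (∏ i, g i) = 0 := by
    have hmap : M.map (Ideal.Quotient.mk H) =
        Matrix.diagonal (fun i => Ideal.Quotient.mk H (g i)) := by
      ext i k
      have hz : Ideal.Quotient.mk H (h i k) = 0 :=
        Ideal.Quotient.eq_zero_iff_mem.mpr (hmem i k)
      by_cases hik : i = k
      · subst hik; simp [hM, hz]
      · simp [hM, hz, Matrix.diagonal_apply_ne _ hik]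
    calc Ideal.Quotient.mk H (∏ i, g i)
        = (Matrix.diagonal (fun i => Ideal.Quotient.mk H (g i))).det := by
          rw [Matrix.det_diagonal, map_prod]
      _ = (M.map (Ideal.Quotient.mk H)).det := by rw [hmap]
      _ = Ideal.Quotient.mk H M.det := by rw [RingHom.map_det]; rfl
      _ = 0 := by rw [hdet, map_zero]
  exact Ideal.Quotient.eq_zero_iff_mem.mp hq
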